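/- arXiv:1108.4801 — 3 statements merged into one kernel-verified Lean document; each statement's English description precedes it below -/
import Mathlib

section
/- Every locally Kemeny optimal aggregation τ satisfies the Extended Condorcet Criterion: for any partition (T,U) of S such that for all a ∈ T and b ∈ U a strict majority of the input rankings prefer a to b, every element of T precedes every element of U in τ. -/
open Finset

/-- A ranking of `n` candidates is a permutation `Fin n ≃ Fin n` sending each
candidate to its position; `σ a < σ b` means `σ` ranks `a` before `b`. -/
def kendall (n : ℕ) (σ π : Equiv.Perm (Fin n)) : ℕ :=
  (Finset.univ.filter (fun p : Fin n × Fin n =>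
    p.1 < p.2 ∧ ¬ ((σ p.1 < σ p.2) ↔ (π p.1 < π p.2)))).card

/-- Total Kendall tau distance of `τ` to the profile `τs`. -/
def totalDist (r n : ℕ) (τs : Fin r → Equiv.Perm (Fin n)) (τ : Equiv.Perm (Fin n)) : ℕ :=
  ∑ i : Fin r, kendall n τ (τs i)

lemma swap_lt_iff {n : ℕ} (c d : Fin n) (hcd : (d:ℕ) = (c:ℕ) + 1)
    (x y : Fin n) (h1 : ¬(x = c ∧ y = d)) (h2 : ¬(x = d ∧ y = c)) :
    Equiv.swap c d x < Equiv.swap c d y ↔ x < y := by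
  simp only [Equiv.swap_apply_def]
  simp only [Fin.ext_iff, not_and] at h1 h2
  split_ifs with e1 e2 e3 e4 e5 e6 e7 e8 <;>
    simp only [Fin.ext_iff] at * <;> simp only [Fin.lt_def] <;> omega

lemma kendall_swap {n : ℕ} (τ π : Equiv.Perm (Fin n)) (a b : Fin n)
    (hab : (τ b : ℕ) = (τ a : ℕ) + 1) :
    kendall n (τ.trans (Equiv.swap (τ a) (τ b))) π + (if π b < π a then 1 else 0)
      = kendall n τ π + (if π a < π b then 1 else 0) := by
  have hne : a ≠ b := by
    intro h; subst h; omega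
  have hπ : π a ≠ π b := fun h => hne (π.injective h)
  have hπtri : ¬ (π a < π b) ↔ π b < π a := by
    constructor
    · intro h; rcases lt_trichotomy (π a) (π b) with h' | h' | h'
      · exact absurd h' h
      · exact absurd h' hπ
      · exact h'
    · intro h h'; exact absurd (lt_trans h h') (lt_irrefl _)
  have hπtri' : ¬ (π b < π a) → π a < π b := by
    intro h; by_contra h'; exact h (hπtri.mp h')
  have hτ'a : (τ.trans (Equiv.swap (τ a) (τ b))) a = τ b := by
    simp [Equiv.trans_apply]
  have hτ'b : (τ.trans (Equiv.swap (τ a) (τ b))) b = τ a := by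
    simp [Equiv.trans_apply]
  have hτab : τ a < τ b := by rw [Fin.lt_def]; omega
  have hτnab : ¬ (τ b < τ a) := by rw [Fin.lt_def]; omega
  have hτ'F : ¬ ((τ.trans (Equiv.swap (τ a) (τ b))) a < (τ.trans (Equiv.swap (τ a) (τ b))) b) := by
    rw [hτ'a, hτ'b]; exact hτnab
  have hτ'T : (τ.trans (Equiv.swap (τ a) (τ b))) b < (τ.trans (Equiv.swap (τ a) (τ b))) a := by
    rw [hτ'a, hτ'b]; exact hτab
  set p0 : Fin n × Fin n := if a < b then (a, b) else (b, a) with hp0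
  unfold kendall
  rw [Finset.card_filter, Finset.card_filter,
    ← Finset.sum_erase_add _ _ (mem_univ p0), ← Finset.sum_erase_add _ _ (mem_univ p0)]
  have hsame : ∀ p ∈ univ.erase p0,
      (if p.1 < p.2 ∧ ¬ ((τ.trans (Equiv.swap (τ a) (τ b))) p.1 <
          (τ.trans (Equiv.swap (τ a) (τ b))) p.2 ↔ π p.1 < π p.2) then 1 else 0)
      = (if p.1 < p.2 ∧ ¬ (τ p.1 < τ p.2 ↔ π p.1 < π p.2) then 1 else 0) := by
    intro p hp
    have hpne : p ≠ p0 := (Finset.mem_erase.mp hp).1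
    by_cases hlt : p.1 < p.2
    · have h1 : ¬ (p.1 = a ∧ p.2 = b) := by
        rintro ⟨h1, h2⟩
        apply hpne
        have hab' : a < b := by rw [← h1, ← h2]; exact hlt
        rw [hp0, if_pos hab']
        exact Prod.ext h1 h2
      have h2 : ¬ (p.1 = b ∧ p.2 = a) := by
        rintro ⟨h1, h2⟩
        apply hpne
        have hab' : b < a := by rw [← h1, ← h2]; exact hlt
        rw [hp0, if_neg (fun h => absurd (lt_trans h hab') (lt_irrefl a))]
        exact Prod.ext h1 h2
      have key : (τ.trans (Equiv.swap (τ a) (τ b))) p.1 <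
          (τ.trans (Equiv.swap (τ a) (τ b))) p.2 ↔ τ p.1 < τ p.2 := by
        simp only [Equiv.trans_apply]
        exact swap_lt_iff (τ a) (τ b) hab (τ p.1) (τ p.2)
          (fun ⟨u, v⟩ => h1 ⟨τ.injective u, τ.injective v⟩)
          (fun ⟨u, v⟩ => h2 ⟨τ.injective u, τ.injective v⟩)
      simp only [key]
    · simp [hlt]
  rw [Finset.sum_congr rfl hsame]
  by_cases hab' : a < b
  · have hpe : p0 = (a, b) := by rw [hp0, if_pos hab']
    rw [hpe]
    have E1 : (if ((a,b) : Fin n × Fin n).1 < ((a,b) : Fin n × Fin n).2 ∧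
        ¬((τ.trans (Equiv.swap (τ a) (τ b))) ((a,b) : Fin n × Fin n).1 <
          (τ.trans (Equiv.swap (τ a) (τ b))) ((a,b) : Fin n × Fin n).2 ↔
          π ((a,b) : Fin n × Fin n).1 < π ((a,b) : Fin n × Fin n).2) then (1:ℕ) else 0)
        = (if π a < π b then 1 else 0) := by
      by_cases hp : π a < π b
      · rw [if_pos ⟨hab', fun h => hτ'F (h.mpr hp)⟩, if_pos hp]
      · rw [if_neg, if_neg hp]
        rintro ⟨-, hcon⟩
        exact hcon (iff_of_false hτ'F hp)
    have E2 : (if ((a,b) : Fin n × Fin n).1 < ((a,b) : Fin n × Fin n).2 ∧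
        ¬(τ ((a,b) : Fin n × Fin n).1 < τ ((a,b) : Fin n × Fin n).2 ↔
          π ((a,b) : Fin n × Fin n).1 < π ((a,b) : Fin n × Fin n).2) then (1:ℕ) else 0)
        = (if π b < π a then 1 else 0) := by
      by_cases hp : π b < π a
      · rw [if_pos ⟨hab', fun h => (hπtri.mpr hp) (h.mp hτab)⟩, if_pos hp]
      · rw [if_neg, if_neg hp]
        rintro ⟨-, hcon⟩
        exact hcon (iff_of_true hτab (hπtri' hp))
    rw [E1, E2, Nat.add_right_comm]
  · have hba : b < a := by
      rcases lt_trichotomy a b with h | h | h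
      · exact absurd h hab'
      · exact absurd h hne
      · exact h
    have hpe : p0 = (b, a) := by rw [hp0, if_neg hab']
    rw [hpe]
    have E1 : (if ((b,a) : Fin n × Fin n).1 < ((b,a) : Fin n × Fin n).2 ∧
        ¬((τ.trans (Equiv.swap (τ a) (τ b))) ((b,a) : Fin n × Fin n).1 <
          (τ.trans (Equiv.swap (τ a) (τ b))) ((b,a) : Fin n × Fin n).2 ↔
          π ((b,a) : Fin n × Fin n).1 < π ((b,a) : Fin n × Fin n).2) then (1:ℕ) else 0)
        = (if π a < π b then 1 else 0) := by
      by_cases hp : π a < π b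
      · rw [if_pos ⟨hba, fun h => (hπtri.mpr (h.mp hτ'T)) hp⟩, if_pos hp]
      · rw [if_neg, if_neg hp]
        rintro ⟨-, hcon⟩
        exact hcon (iff_of_true hτ'T (hπtri.mp hp))
    have E2 : (if ((b,a) : Fin n × Fin n).1 < ((b,a) : Fin n × Fin n).2 ∧
        ¬(τ ((b,a) : Fin n × Fin n).1 < τ ((b,a) : Fin n × Fin n).2 ↔
          π ((b,a) : Fin n × Fin n).1 < π ((b,a) : Fin n × Fin n).2) then (1:ℕ) else 0)
        = (if π b < π a then 1 else 0) := by
      by_cases hp : π b < π a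
      · rw [if_pos ⟨hba, fun h => hτnab (h.mpr hp)⟩, if_pos hp]
      · rw [if_neg, if_neg hp]
        rintro ⟨-, hcon⟩
        exact hcon (iff_of_false hτnab hp)
    rw [E1, E2, Nat.add_right_comm]

lemma totalDist_swap {r n : ℕ} (τs : Fin r → Equiv.Perm (Fin n))
    (τ : Equiv.Perm (Fin n)) (a b : Fin n) (hab : (τ b : ℕ) = (τ a : ℕ) + 1) :
    totalDist r n τs (τ.trans (Equiv.swap (τ a) (τ b)))
      + (Finset.univ.filter (fun i => τs i b < τs i a)).card
      = totalDist r n τs τ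
      + (Finset.univ.filter (fun i => τs i a < τs i b)).card := by
  unfold totalDist
  rw [Finset.card_filter, Finset.card_filter, ← Finset.sum_add_distrib,
    ← Finset.sum_add_distrib]
  exact Finset.sum_congr rfl (fun i _ => kendall_swap τ (τs i) a b hab)

/-- Every locally Kemeny optimal aggregation satisfies the Extended Condorcet
Criterion. -/
theorem locally_kemeny_optimal_satisfies_ECC (n r : ℕ)
    (τ : Equiv.Perm (Fin n)) (τs : Fin r → Equiv.Perm (Fin n))
    (hlko : ∀ a b : Fin n, (τ b : ℕ) = (τ a : ℕ) + 1 →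
      ¬ (totalDist r n τs (τ.trans (Equiv.swap (τ a) (τ b))) < totalDist r n τs τ)) :
    ∀ T : Finset (Fin n),
      (∀ a ∈ T, ∀ b ∉ T, r < 2 * (Finset.univ.filter (fun i => τs i a < τs i b)).card) →
      ∀ a ∈ T, ∀ b ∉ T, τ a < τ b := by
  intro T hT a ha b hb
  -- no adjacent pair (x ∉ T immediately before y ∈ T) can exist
  have hadj : ∀ x y : Fin n, x ∉ T → y ∈ T → (τ y : ℕ) = (τ x : ℕ) + 1 → False := by
    intro x y hx hy hxy
    apply hlko x y hxy
    have hmaj := hT y hy x hx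
    have hsum := totalDist_swap τs τ x y hxy
    -- the two filters are disjoint subsets of univ
    have hsub : (Finset.univ.filter (fun i => τs i x < τs i y)) ⊆
        Finset.univ \ (Finset.univ.filter (fun i => τs i y < τs i x)) := by
      intro i hi
      simp only [Finset.mem_filter, Finset.mem_sdiff, Finset.mem_univ, true_and] at *
      exact fun h => absurd (lt_trans hi h) (lt_irrefl _)
    have hle := Finset.card_le_card hsub
    rw [Finset.card_sdiff_of_subset (Finset.subset_univ _), Finset.card_univ, Fintype.card_fin] at hle
    have hle2 : (Finset.univ.filter (fun i => τs i y < τs i x)).card ≤ r := by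
      calc _ ≤ (Finset.univ : Finset (Fin r)).card := Finset.card_le_card (Finset.filter_subset _ _)
        _ = r := by rw [Finset.card_univ, Fintype.card_fin]
    omega
  -- descent: no x ∉ T can precede any y ∈ T
  have key : ∀ m : ℕ, ∀ x y : Fin n, x ∉ T → y ∈ T →
      (τ y : ℕ) = (τ x : ℕ) + (m + 1) → False := by
    intro m
    induction m with
    | zero => intro x y hx hy h; exact hadj x y hx hy h
    | succ k ih =>
      intro x y hx hy h
      have hlt : (τ x : ℕ) + 1 < n := by have := (τ y).isLt; omega
      set c : Fin n := τ.symm ⟨(τ x : ℕ) + 1, hlt⟩ with hc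
      have hτc : (τ c : ℕ) = (τ x : ℕ) + 1 := by
        rw [hc, Equiv.apply_symm_apply]
      by_cases hcT : c ∈ T
      · exact hadj x c hx hcT hτc
      · exact ih c y hcT hy (by omega)
  -- conclude
  have hne : a ≠ b := fun h => hb (h ▸ ha)
  have hτne : (τ a : ℕ) ≠ (τ b : ℕ) := by
    intro h
    exact hne (τ.injective (Fin.val_injective h))
  by_contra hcon
  rw [Fin.lt_def] at hcon
  have hba : (τ b : ℕ) < (τ a : ℕ) := by omega
  exact key ((τ a : ℕ) - (τ b : ℕ) - 1) b a hb ha (by omega)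
end

section
/- Any Kemeny optimal aggregation satisfies the Extended Condorcet Criterion: if (T,U) is a partition of S such that for every a ∈ T and b ∈ U a strict majority of input rankings prefers a to b, then the Kemeny optimal aggregation places every element of T before every element of U. -/
open Finset

/-- If some element of `T` is ranked after some element outside `T`, then there is an
adjacent such pair. -/
lemma descent_aux (n : ℕ) (τ : Equiv.Perm (Fin n)) (T : Finset (Fin n)) :
    ∀ k, ∀ a b : Fin n, a ∈ T → b ∉ T → (τ a : ℕ) = (τ b : ℕ) + k →
      ∃ x y : Fin n, x ∉ T ∧ y ∈ T ∧ (τ y : ℕ) = (τ x : ℕ) + 1 := by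
  intro k
  induction k with
  | zero =>
    intro a b ha hb h
    exfalso
    have : a = b := τ.injective (Fin.ext (by omega))
    exact hb (this ▸ ha)
  | succ k ih =>
    intro a b ha hb h
    rcases Nat.eq_zero_or_pos k with hk | hk
    · exact ⟨b, a, hb, ha, by omega⟩
    · have hlt : (τ b : ℕ) + 1 < n := by
        have := (τ a).isLt
        omega
      set c := τ.symm ⟨(τ b : ℕ) + 1, hlt⟩ with hc
      have hτc : (τ c : ℕ) = (τ b : ℕ) + 1 := by simp [hc]
      by_cases hcT : c ∈ T
      · exact ⟨b, c, hb, hcT, hτc⟩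
      · exact ih a c ha hcT (by omega)

/-- Swapping two adjacently-ranked elements preserves the order of all other pairs. -/
lemma swap_agree (n : ℕ) (τ : Equiv.Perm (Fin n)) (x y : Fin n)
    (h : (τ y : ℕ) = (τ x : ℕ) + 1) :
    ∀ c d : Fin n, ¬(c = x ∧ d = y) → ¬(c = y ∧ d = x) →
      ((τ * Equiv.swap x y) c < (τ * Equiv.swap x y) d ↔ τ c < τ d) := by
  have hxy : x ≠ y := by
    intro e; rw [e] at h; omega
  intro c d h1 h2
  have inj : ∀ u v : Fin n, u ≠ v → (τ u : ℕ) ≠ (τ v : ℕ) := by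
    intro u v huv he
    exact huv (τ.injective (Fin.ext he))
  simp only [Equiv.Perm.mul_apply, Fin.lt_def]
  rcases eq_or_ne c x with hcx | hcx
  · rcases eq_or_ne d x with hdx | hdx
    · rw [hcx, hdx]; omega
    · rcases eq_or_ne d y with hdy | hdy
      · exact absurd ⟨hcx, hdy⟩ h1
      · rw [hcx, Equiv.swap_apply_left, Equiv.swap_apply_of_ne_of_ne hdx hdy]
        have e1 := inj d x hdx
        have e2 := inj d y hdy
        omega
  · rcases eq_or_ne c y with hcy | hcy
    · rcases eq_or_ne d x with hdx | hdx
      · exact absurd ⟨hcy, hdx⟩ h2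
      · rcases eq_or_ne d y with hdy | hdy
        · rw [hcy, hdy]; omega
        · rw [hcy, Equiv.swap_apply_right, Equiv.swap_apply_of_ne_of_ne hdx hdy]
          have e1 := inj d x hdx
          have e2 := inj d y hdy
          omega
    · rcases eq_or_ne d x with hdx | hdx
      · rw [hdx, Equiv.swap_apply_left, Equiv.swap_apply_of_ne_of_ne hcx hcy]
        have e1 := inj c x hcx
        have e2 := inj c y hcy
        omega
      · rcases eq_or_ne d y with hdy | hdy
        · rw [hdy, Equiv.swap_apply_right, Equiv.swap_apply_of_ne_of_ne hcx hcy]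
          have e1 := inj c x hcx
          have e2 := inj c y hcy
          omega
        · rw [Equiv.swap_apply_of_ne_of_ne hcx hcy, Equiv.swap_apply_of_ne_of_ne hdx hdy]

/-- Decomposition of the Kendall distance for a permutation `ρ` that agrees with `τ`
on the order of every pair except `(u, v)`. -/
lemma kendall_decomp (n : ℕ) (ρ τ π : Equiv.Perm (Fin n)) (u v : Fin n) (huv : u < v)
    (hagree : ∀ c d : Fin n, ¬(c = u ∧ d = v) → ¬(c = v ∧ d = u) →
      (ρ c < ρ d ↔ τ c < τ d)) :
    kendall n ρ π =
      (Finset.univ.filter (fun p : Fin n × Fin n =>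
        p ≠ (u, v) ∧ p.1 < p.2 ∧ ¬ ((τ p.1 < τ p.2) ↔ (π p.1 < π p.2)))).card +
      (if ¬ (ρ u < ρ v ↔ π u < π v) then 1 else 0) := by
  classical
  unfold kendall
  set A := Finset.univ.filter (fun p : Fin n × Fin n =>
    p.1 < p.2 ∧ ¬ ((ρ p.1 < ρ p.2) ↔ (π p.1 < π p.2))) with hA
  have h1 : A.filter (fun p => p ≠ (u, v)) =
      Finset.univ.filter (fun p : Fin n × Fin n =>
        p ≠ (u, v) ∧ p.1 < p.2 ∧ ¬ ((τ p.1 < τ p.2) ↔ (π p.1 < π p.2))) := by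
    ext p
    simp only [hA, mem_filter, mem_univ, true_and]
    constructor
    · rintro ⟨⟨hlt, hne⟩, hp⟩
      refine ⟨hp, hlt, ?_⟩
      rw [← hagree p.1 p.2 (fun ⟨e1, e2⟩ => hp (Prod.ext e1 e2))
        (fun ⟨e1, e2⟩ => by rw [e1, e2] at hlt; exact absurd hlt (lt_asymm huv))]
      exact hne
    · rintro ⟨hp, hlt, hne⟩
      refine ⟨⟨hlt, ?_⟩, hp⟩
      rw [hagree p.1 p.2 (fun ⟨e1, e2⟩ => hp (Prod.ext e1 e2))
        (fun ⟨e1, e2⟩ => by rw [e1, e2] at hlt; exact absurd hlt (lt_asymm huv))]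
      exact hne
  have h2 : A.filter (fun p => ¬ p ≠ (u, v)) =
      if ¬ (ρ u < ρ v ↔ π u < π v) then {(u, v)} else (∅ : Finset (Fin n × Fin n)) := by
    ext p
    simp only [hA, mem_filter, mem_univ, true_and, not_not]
    split_ifs with hc
    · simp only [Finset.notMem_empty, iff_false]
      rintro ⟨⟨_, hne⟩, rfl⟩
      exact hne hc
    · simp only [Finset.mem_singleton]
      constructor
      · rintro ⟨_, hp⟩; exact hp
      · rintro rfl; exact ⟨⟨huv, hc⟩, rfl⟩
  have h3 := Finset.card_filter_add_card_filter_not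
    (s := A) (p := fun p => p ≠ (u, v))
  rw [h1, h2] at h3
  split_ifs at h3 with hc
  · simp only [Finset.card_empty] at h3
    rw [if_neg (fun h => h hc)]
    omega
  · simp only [Finset.card_singleton] at h3
    rw [if_pos hc]
    omega

/-- Any Kemeny optimal aggregation satisfies the Extended Condorcet Criterion. -/
theorem kemeny_optimal_satisfies_ECC (n r : ℕ)
    (τ : Equiv.Perm (Fin n)) (τs : Fin r → Equiv.Perm (Fin n))
    (hopt : ∀ σ : Equiv.Perm (Fin n), totalDist r n τs τ ≤ totalDist r n τs σ) :
    ∀ T : Finset (Fin n),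
      (∀ a ∈ T, ∀ b ∉ T, r < 2 * (Finset.univ.filter (fun i => τs i a < τs i b)).card) →
      ∀ a ∈ T, ∀ b ∉ T, τ a < τ b := by
  classical
  intro T hmaj a ha b hb
  by_contra hab
  have hne : a ≠ b := fun e => hb (e ▸ ha)
  have hvne : (τ a : ℕ) ≠ (τ b : ℕ) := fun e => hne (τ.injective (Fin.ext e))
  have hba : (τ b : ℕ) < (τ a : ℕ) := by
    rw [Fin.lt_def] at hab
    omega
  obtain ⟨x, y, hxT, hyT, hadj⟩ :=
    descent_aux n τ T ((τ a : ℕ) - (τ b : ℕ)) a b ha hb (by omega)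
  set σ := τ * Equiv.swap x y with hσ
  have hagree := swap_agree n τ x y hadj
  have hxy : x ≠ y := by
    intro e; rw [e] at hadj; omega
  have hσx : (σ x : ℕ) = (τ y : ℕ) := by
    simp [hσ, Equiv.Perm.mul_apply]
  have hσy : (σ y : ℕ) = (τ x : ℕ) := by
    simp [hσ, Equiv.Perm.mul_apply]
  -- majority prefers y (∈ T) to x (∉ T)
  have hmaj' := hmaj y hyT x hxT
  -- order facts
  have hτxy : τ x < τ y := by rw [Fin.lt_def]; omega
  have hστ : ¬ σ x < σ y := by rw [Fin.lt_def]; omega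
  have hστ' : σ y < σ x := by rw [Fin.lt_def]; omega
  have hτ' : ¬ τ y < τ x := by rw [Fin.lt_def]; omega
  -- counting lemmas
  have hcards : ∀ u v : Fin n,
      (Finset.univ.filter (fun i => τs i u < τs i v)).card +
      (Finset.univ.filter (fun i => ¬ τs i u < τs i v)).card = r := by
    intro u v
    rw [Finset.card_filter_add_card_filter_not, Finset.card_univ, Fintype.card_fin]
  rcases lt_or_gt_of_ne hxy with hlt | hlt
  · -- x < y : use pair (x, y)
    have hdσ := fun i => kendall_decomp n σ τ (τs i) x y hlt hagree
    have hdτ := fun i => kendall_decomp n τ τ (τs i) x y hlt (fun _ _ _ _ => Iff.rfl)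
    have hτsum : totalDist r n τs τ =
        (∑ i : Fin r, (Finset.univ.filter (fun p : Fin n × Fin n =>
          p ≠ (x, y) ∧ p.1 < p.2 ∧ ¬ ((τ p.1 < τ p.2) ↔ (τs i p.1 < τs i p.2)))).card) +
        (Finset.univ.filter (fun i => ¬ τs i x < τs i y)).card := by
      unfold totalDist
      rw [Finset.card_filter, ← Finset.sum_add_distrib]
      refine Finset.sum_congr rfl (fun i _ => ?_)
      rw [hdτ i]
      congr 1
      exact if_congr (by tauto) rfl rfl
    have hσsum : totalDist r n τs σ =
        (∑ i : Fin r, (Finset.univ.filter (fun p : Fin n × Fin n =>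
          p ≠ (x, y) ∧ p.1 < p.2 ∧ ¬ ((τ p.1 < τ p.2) ↔ (τs i p.1 < τs i p.2)))).card) +
        (Finset.univ.filter (fun i => τs i x < τs i y)).card := by
      unfold totalDist
      rw [Finset.card_filter, ← Finset.sum_add_distrib]
      refine Finset.sum_congr rfl (fun i _ => ?_)
      rw [hdσ i]
      congr 1
      exact if_congr (by tauto) rfl rfl
    have hle := hopt σ
    rw [hτsum, hσsum] at hle
    have hle' : (Finset.univ.filter (fun i => ¬ τs i x < τs i y)).card ≤
        (Finset.univ.filter (fun i => τs i x < τs i y)).card := by omega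
    have hsub : (Finset.univ.filter (fun i => τs i y < τs i x)) ⊆
        (Finset.univ.filter (fun i => ¬ τs i x < τs i y)) := by
      intro i hi
      simp only [mem_filter, mem_univ, true_and] at hi ⊢
      exact lt_asymm hi
    have := Finset.card_le_card hsub
    have := hcards x y
    omega
  · -- y < x : use pair (y, x)
    have hdσ := fun i => kendall_decomp n σ τ (τs i) y x hlt
      (fun c d h1 h2 => hagree c d (fun ⟨e1, e2⟩ => h2 ⟨e1, e2⟩) (fun ⟨e1, e2⟩ => h1 ⟨e1, e2⟩))
    have hdτ := fun i => kendall_decomp n τ τ (τs i) y x hlt (fun _ _ _ _ => Iff.rfl)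
    have hτsum : totalDist r n τs τ =
        (∑ i : Fin r, (Finset.univ.filter (fun p : Fin n × Fin n =>
          p ≠ (y, x) ∧ p.1 < p.2 ∧ ¬ ((τ p.1 < τ p.2) ↔ (τs i p.1 < τs i p.2)))).card) +
        (Finset.univ.filter (fun i => τs i y < τs i x)).card := by
      unfold totalDist
      rw [Finset.card_filter, ← Finset.sum_add_distrib]
      refine Finset.sum_congr rfl (fun i _ => ?_)
      rw [hdτ i]
      congr 1
      exact if_congr (by tauto) rfl rfl
    have hσsum : totalDist r n τs σ =
        (∑ i : Fin r, (Finset.univ.filter (fun p : Fin n × Fin n =>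
          p ≠ (y, x) ∧ p.1 < p.2 ∧ ¬ ((τ p.1 < τ p.2) ↔ (τs i p.1 < τs i p.2)))).card) +
        (Finset.univ.filter (fun i => ¬ τs i y < τs i x)).card := by
      unfold totalDist
      rw [Finset.card_filter, ← Finset.sum_add_distrib]
      refine Finset.sum_congr rfl (fun i _ => ?_)
      rw [hdσ i]
      congr 1
      exact if_congr (by tauto) rfl rfl
    have hle := hopt σ
    rw [hτsum, hσsum] at hle
    have := hcards y x
    omega
end

section
/- Unanimity for Kemeny aggregation: if every input ranking places a before b, then every Kemeny optimal aggregation places a before b. -/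
open Finset

namespace KemenyAux

/-- The set of discordant (sorted) pairs between `ρ` and `π`. -/
def D {n : ℕ} (ρ π : Equiv.Perm (Fin n)) : Finset (Fin n × Fin n) :=
  Finset.univ.filter (fun p : Fin n × Fin n =>
    p.1 < p.2 ∧ ¬ ((ρ p.1 < ρ p.2) ↔ (π p.1 < π p.2)))

lemma kendall_eq {n : ℕ} (ρ π : Equiv.Perm (Fin n)) : kendall n ρ π = (D ρ π).card := rfl

/-- Unordered discordance predicate. -/
def Q {n : ℕ} (ρ π : Equiv.Perm (Fin n)) (x y : Fin n) : Prop :=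
  ¬ ((ρ x < ρ y) ↔ (π x < π y))

lemma mem_D {n : ℕ} (ρ π : Equiv.Perm (Fin n)) (p : Fin n × Fin n) :
    p ∈ D ρ π ↔ p.1 < p.2 ∧ Q ρ π p.1 p.2 := by
  simp [D, Q]

lemma vne {n : ℕ} (ρ : Equiv.Perm (Fin n)) {x y : Fin n} (h : x ≠ y) :
    (ρ x).val ≠ (ρ y).val := by
  simp only [ne_eq, Fin.val_inj]
  exact fun e => h (ρ.injective e)

lemma Q_symm {n : ℕ} (ρ π : Equiv.Perm (Fin n)) {x y : Fin n} (h : x ≠ y) :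
    Q ρ π x y ↔ Q ρ π y x := by
  have h1 := vne ρ h
  have h2 := vne π h
  simp only [Q, Fin.lt_def]
  omega

/-- Sort a pair. -/
def m {n : ℕ} (q : Fin n × Fin n) : Fin n × Fin n :=
  if q.1 < q.2 then q else (q.2, q.1)

lemma m_cases {n : ℕ} (q : Fin n × Fin n) : m q = q ∨ m q = (q.2, q.1) := by
  unfold m; split <;> simp

lemma m_mem {n : ℕ} (ρ π : Equiv.Perm (Fin n)) {x y : Fin n} (hne : x ≠ y)
    (hQ : Q ρ π x y) : m (x, y) ∈ D ρ π := by
  rcases lt_or_gt_of_ne hne with h | h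
  · rw [mem_D]; unfold m; simp [h, hQ]
  · rw [mem_D]; unfold m
    simp only [not_lt.mpr h.le]
    simp [h, (Q_symm ρ π hne).mp hQ]

lemma m_inj {n : ℕ} {u v u' v' : Fin n} (h : m (u, v) = m (u', v')) :
    (u = u' ∧ v = v') ∨ (u = v' ∧ v = u') := by
  unfold m at h
  split at h <;> split at h <;>
    simp only [Prod.mk.injEq] at h <;> tauto

set_option maxHeartbeats 1000000 in
lemma key {n : ℕ} (τ π : Equiv.Perm (Fin n)) (a b : Fin n) (hab : a ≠ b)
    (hτ : τ b < τ a) (hπ : π a < π b) :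
    kendall n (τ * Equiv.swap a b) π < kendall n τ π := by
  set σ := τ * Equiv.swap a b with hσdef
  have hσa : σ a = τ b := by
    simp [hσdef, Equiv.Perm.mul_apply]
  have hσb : σ b = τ a := by
    simp [hσdef, Equiv.Perm.mul_apply]
  have hσx : ∀ x, x ≠ a → x ≠ b → σ x = τ x := fun x h1 h2 => by
    simp [hσdef, Equiv.Perm.mul_apply, Equiv.swap_apply_of_ne_of_ne h1 h2]
  rw [kendall_eq, kendall_eq]
  -- the sorted pair {a,b}
  set q₀ : Fin n × Fin n := m (a, b) with hq₀def
  have hq₀mem : q₀ ∈ D τ π := by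
    apply m_mem τ π hab
    simp only [Q]
    have h1 : ¬ τ a < τ b := not_lt.mpr hτ.le
    tauto
  have hQab : ¬ Q σ π a b := by
    simp only [Q, hσa, hσb, not_not]
    constructor <;> intro <;> [exact hπ; exact hτ]
  have hQba : ¬ Q σ π b a := fun h => hQab ((Q_symm σ π hab.symm).mp h)
  -- the injection
  set f : Fin n × Fin n → Fin n × Fin n := fun p =>
    if p ∈ D τ π then p else m (Equiv.swap a b p.1, Equiv.swap a b p.2) with hfdef
  -- basic numeric facts
  have hτn : (τ b).val < (τ a).val := hτ
  have hπn : (π a).val < (π b).val := hπ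
  -- structure of elements of D σ π not in D τ π
  have struct : ∀ p : Fin n × Fin n, p ∈ D σ π → p ∉ D τ π →
      ((p.1 = a ∧ p.2 ≠ a ∧ p.2 ≠ b) ∨ (p.1 = b ∧ p.2 ≠ a ∧ p.2 ≠ b) ∨
       (p.2 = a ∧ p.1 ≠ a ∧ p.1 ≠ b) ∨ (p.2 = b ∧ p.1 ≠ a ∧ p.1 ≠ b)) := by
    rintro ⟨x, y⟩ hp hpn
    rw [mem_D] at hp hpn
    obtain ⟨hxy, hQσ⟩ := hp
    have hQτn : ¬ Q τ π x y := fun h => hpn ⟨hxy, h⟩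
    simp only at hQσ hQτn hxy ⊢
    by_cases hxa : x = a
    · have hya : y ≠ a := fun e => (ne_of_lt hxy) (hxa.trans e.symm)
      have hyb : y ≠ b := by
        intro e; apply hQab; rw [hxa, e] at hQσ; exact hQσ
      exact Or.inl ⟨hxa, hya, hyb⟩
    by_cases hxb : x = b
    · have hyb : y ≠ b := fun e => (ne_of_lt hxy) (hxb.trans e.symm)
      have hya : y ≠ a := by
        intro e; apply hQba; rw [hxb, e] at hQσ; exact hQσ
      exact Or.inr (Or.inl ⟨hxb, hya, hyb⟩)
    by_cases hya : y = a
    · exact Or.inr (Or.inr (Or.inl ⟨hya, hxa, hxb⟩))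
    by_cases hyb : y = b
    · exact Or.inr (Or.inr (Or.inr ⟨hyb, hxa, hxb⟩))
    exfalso
    apply hQτn
    simpa only [Q, hσx x hxa hxb, hσx y hya hyb] using hQσ
  have hmaps : ∀ p ∈ D σ π, f p ∈ (D τ π).erase q₀ := by
    rintro p hp
    have hq₀ab := m_cases (a, b)
    rw [← hq₀def] at hq₀ab
    by_cases hpτ : p ∈ D τ π
    · have hfp : f p = p := by simp [hfdef, hpτ]
      rw [hfp, Finset.mem_erase]
      refine ⟨?_, hpτ⟩
      rintro rfl
      rw [mem_D] at hp
      rcases hq₀ab with h | h <;> rw [h] at hp <;>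
        simp only at hp
      · exact hQab hp.2
      · exact hQba hp.2
    · have hfp : f p = m (Equiv.swap a b p.1, Equiv.swap a b p.2) := by
        simp [hfdef, hpτ]
      obtain ⟨x, y⟩ := p
      have hst := struct (x, y) hp hpτ
      rw [mem_D] at hp hpτ
      obtain ⟨hxy, hQσ⟩ := hp
      have hQτn : ¬ Q τ π x y := fun h => hpτ ⟨hxy, h⟩
      simp only at hst hfp hQσ hQτn hxy ⊢
      have erase_of : ∀ u v : Fin n, u ≠ v → (u ≠ a ∧ u ≠ b) ∨ (v ≠ a ∧ v ≠ b) →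
          Q τ π u v → m (u, v) ∈ (D τ π).erase q₀ := by
        intro u v huv hne hQ
        rw [Finset.mem_erase]
        refine ⟨?_, m_mem τ π huv hQ⟩
        rcases m_cases (u, v) with h | h <;> rw [h] <;>
          rcases hq₀ab with h' | h' <;> rw [h'] <;>
          simp only [ne_eq, Prod.mk.injEq, not_and] <;>
          intro e1 <;> subst e1 <;> tauto
      rcases hst with ⟨he, hya, hyb⟩ | ⟨he, hya, hyb⟩ | ⟨he, hxa, hxb⟩ | ⟨he, hxa, hxb⟩
      · -- p = (a, y)
        rw [he] at hQσ hQτn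
        rw [hfp, he, Equiv.swap_apply_left, Equiv.swap_apply_of_ne_of_ne hya hyb]
        refine erase_of b y (fun e => hyb e.symm) (Or.inr ⟨hya, hyb⟩) ?_
        simp only [Q, hσa, hσx y hya hyb, Fin.lt_def] at hQσ hQτn ⊢
        omega
      · -- p = (b, y)
        rw [he] at hQσ hQτn
        rw [hfp, he, Equiv.swap_apply_right, Equiv.swap_apply_of_ne_of_ne hya hyb]
        refine erase_of a y (fun e => hya e.symm) (Or.inr ⟨hya, hyb⟩) ?_
        simp only [Q, hσb, hσx y hya hyb, Fin.lt_def] at hQσ hQτn ⊢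
        omega
      · -- p = (x, a)
        rw [he] at hQσ hQτn
        rw [hfp, he, Equiv.swap_apply_left, Equiv.swap_apply_of_ne_of_ne hxa hxb]
        refine erase_of x b hxb (Or.inl ⟨hxa, hxb⟩) ?_
        simp only [Q, hσa, hσx x hxa hxb, Fin.lt_def] at hQσ hQτn ⊢
        omega
      · -- p = (x, b)
        rw [he] at hQσ hQτn
        rw [hfp, he, Equiv.swap_apply_right, Equiv.swap_apply_of_ne_of_ne hxa hxb]
        refine erase_of x a hxa (Or.inl ⟨hxa, hxb⟩) ?_
        simp only [Q, hσb, hσx x hxa hxb, Fin.lt_def] at hQσ hQτn ⊢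
        omega
  have hinj : Set.InjOn f (D σ π) := by
    intro p hp q hq hfpq
    rw [Finset.mem_coe] at hp hq
    -- mixed-case helper: p ∈ D τ, q ∉ D τ leads to contradiction
    have mixed : ∀ p q : Fin n × Fin n, p ∈ D σ π → q ∈ D σ π →
        p ∈ D τ π → q ∉ D τ π → f p = f q → False := by
      clear hfpq hp hq p q
      rintro p ⟨x, y⟩ hp hq hpτ hqτ hfpq
      have hfq : f (x, y) = m (Equiv.swap a b x, Equiv.swap a b y) := by
        simp [hfdef, hqτ]
      have hfp : f p = p := by simp [hfdef, hpτ]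
      have hst := struct (x, y) hq hqτ
      rw [mem_D] at hq
      obtain ⟨hxy, hQσq⟩ := hq
      have hQτq : ¬ Q τ π x y := fun h => hqτ (by rw [mem_D]; exact ⟨hxy, h⟩)
      rw [mem_D] at hp
      obtain ⟨hp12, hQσp⟩ := hp
      rw [hfp, hfq] at hfpq
      simp only at hst hxy hQσq hQτq
      rcases hst with ⟨he, hya, hyb⟩ | ⟨he, hya, hyb⟩ | ⟨he, hxa, hxb⟩ | ⟨he, hxa, hxb⟩
      · -- q = (a, y); f q = m (b, y); p is (b,y) or (y,b)
        rw [he] at hQσq hQτq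
        rw [he, Equiv.swap_apply_left, Equiv.swap_apply_of_ne_of_ne hya hyb] at hfpq
        have hQby : ¬ Q σ π b y := by
          simp only [Q, hσa, hσb, hσx y hya hyb, Fin.lt_def] at hQσq hQτq ⊢
          omega
        obtain ⟨p1, p2⟩ := p
        rcases m_cases (b, y) with h | h <;> rw [h] at hfpq <;>
          simp only [Prod.mk.injEq] at hfpq <;>
          obtain ⟨rfl, rfl⟩ := hfpq <;> simp only at hQσp
        · exact hQby hQσp
        · exact hQby ((Q_symm σ π hyb).mp hQσp)
      · -- q = (b, y); f q = m (a, y)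
        rw [he] at hQσq hQτq
        rw [he, Equiv.swap_apply_right, Equiv.swap_apply_of_ne_of_ne hya hyb] at hfpq
        have hQay : ¬ Q σ π a y := by
          simp only [Q, hσa, hσb, hσx y hya hyb, Fin.lt_def] at hQσq hQτq ⊢
          omega
        obtain ⟨p1, p2⟩ := p
        rcases m_cases (a, y) with h | h <;> rw [h] at hfpq <;>
          simp only [Prod.mk.injEq] at hfpq <;>
          obtain ⟨rfl, rfl⟩ := hfpq <;> simp only at hQσp
        · exact hQay hQσp
        · exact hQay ((Q_symm σ π hya).mp hQσp)
      · -- q = (x, a); f q = m (x, b)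
        rw [he] at hQσq hQτq
        rw [he, Equiv.swap_apply_left, Equiv.swap_apply_of_ne_of_ne hxa hxb] at hfpq
        have hQxb : ¬ Q σ π x b := by
          simp only [Q, hσa, hσb, hσx x hxa hxb, Fin.lt_def] at hQσq hQτq ⊢
          omega
        obtain ⟨p1, p2⟩ := p
        rcases m_cases (x, b) with h | h <;> rw [h] at hfpq <;>
          simp only [Prod.mk.injEq] at hfpq <;>
          obtain ⟨rfl, rfl⟩ := hfpq <;> simp only at hQσp
        · exact hQxb hQσp
        · exact hQxb ((Q_symm σ π hxb).mpr hQσp)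
      · -- q = (x, b); f q = m (x, a)
        rw [he] at hQσq hQτq
        rw [he, Equiv.swap_apply_right, Equiv.swap_apply_of_ne_of_ne hxa hxb] at hfpq
        have hQxa : ¬ Q σ π x a := by
          simp only [Q, hσa, hσb, hσx x hxa hxb, Fin.lt_def] at hQσq hQτq ⊢
          omega
        obtain ⟨p1, p2⟩ := p
        rcases m_cases (x, a) with h | h <;> rw [h] at hfpq <;>
          simp only [Prod.mk.injEq] at hfpq <;>
          obtain ⟨rfl, rfl⟩ := hfpq <;> simp only at hQσp
        · exact hQxa hQσp
        · exact hQxa ((Q_symm σ π hxa).mpr hQσp)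
    by_cases hpτ : p ∈ D τ π <;> by_cases hqτ : q ∈ D τ π
    · simpa [hfdef, hpτ, hqτ] using hfpq
    · exact absurd (mixed p q hp hq hpτ hqτ hfpq) (fun h => h)
    · exact absurd (mixed q p hq hp hqτ hpτ hfpq.symm) (fun h => h)
    · -- both outside D τ π : f is sorted swap, injective on sorted pairs
      obtain ⟨x, y⟩ := p
      obtain ⟨x', y'⟩ := q
      have hfp : f (x, y) = m (Equiv.swap a b x, Equiv.swap a b y) := by
        simp [hfdef, hpτ]
      have hfq : f (x', y') = m (Equiv.swap a b x', Equiv.swap a b y') := by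
        simp [hfdef, hqτ]
      rw [hfp, hfq] at hfpq
      rw [mem_D] at hp hq
      have h1 : x < y := hp.1
      have h2 : x' < y' := hq.1
      rcases m_inj hfpq with ⟨e1, e2⟩ | ⟨e1, e2⟩
      · have := (Equiv.swap a b).injective e1
        have := (Equiv.swap a b).injective e2
        simp_all
      · have e1' := (Equiv.swap a b).injective e1
        have e2' := (Equiv.swap a b).injective e2
        subst e1' e2'
        exact absurd h2 (not_lt.mpr h1.le)
  have hcard : (D σ π).card ≤ ((D τ π).erase q₀).card :=
    Finset.card_le_card_of_injOn f hmaps hinj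
  have h1 : ((D τ π).erase q₀).card = (D τ π).card - 1 :=
    Finset.card_erase_of_mem hq₀mem
  have h2 : 0 < (D τ π).card := Finset.card_pos.mpr ⟨q₀, hq₀mem⟩
  omega

end KemenyAux

/-- Unanimity: if every input ranking places a before b, so does every Kemeny
optimal aggregation. -/
theorem kemeny_unanimity (n r : ℕ) (hr : 0 < r)
    (τs : Fin r → Equiv.Perm (Fin n)) (a b : Fin n) (hab : a ≠ b)
    (hunan : ∀ i, τs i a < τs i b)
    (τ : Equiv.Perm (Fin n))
    (hopt : ∀ σ : Equiv.Perm (Fin n), totalDist r n τs τ ≤ totalDist r n τs σ) :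
    τ a < τ b := by
  by_contra h
  have hne : τ b ≠ τ a := fun e => hab (τ.injective e.symm)
  have hba : τ b < τ a := lt_of_le_of_ne (not_lt.mp h) hne
  have : Nonempty (Fin r) := ⟨⟨0, hr⟩⟩
  have hlt : totalDist r n τs (τ * Equiv.swap a b) < totalDist r n τs τ := by
    unfold totalDist
    exact Finset.sum_lt_sum_of_nonempty Finset.univ_nonempty
      (fun i _ => KemenyAux.key τ (τs i) a b hab hba (hunan i))
  exact absurd (hopt (τ * Equiv.swap a b)) (not_le.mpr hlt)
end
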